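/- Let X be a geodesic δ-hyperbolic metric space, let G be a group that is not virtually cyclic acting on X by isometries with a unital axial WPD loxodromic element f ∈ G, let x₀ ∈ Ax(f), and let 𝒜 := {g·Ax(f) : g ∈ G}; assume there is a constant K₀ such that any two distinct axes in 𝒜 have nearest-point projections onto each other of diameter at most K₀. Then there exists K > 0 such that the following holds: if γ₀, γ₁, …, γ_N ∈ 𝒜 and z ∈ X satisfy (1) d_{γ_{i−1}}(x₀, γ_i) ≥ K for 1 ≤ i ≤ N, and (2) d_{γ_N}(x₀, z) ≥ K, then d_{γ₀}(x₀, z) ≥ d_{γ₀}(x₀, γ₁) − K. -/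

import Mathlib

noncomputable section

open Set Metric Pointwise

/-- The Gromov product `(y|z)_x`. -/
def gromovProd {X : Type*} [MetricSpace X] (x y z : X) : ℝ :=
  (dist x y + dist x z - dist y z) / 2

/-- `γ` restricted to `[a, b]` is a unit-speed geodesic. -/
def IsGeodesicParam {X : Type*} [MetricSpace X] (γ : ℝ → X) (a b : ℝ) : Prop :=
  ∀ s ∈ Set.Icc a b, ∀ t ∈ Set.Icc a b, dist (γ s) (γ t) = |s - t|

/-- `γ` is a geodesic from `x` to `y`, parametrized by arclength on `[0, dist x y]`. -/
def IsGeodesicBetween {X : Type*} [MetricSpace X] (γ : ℝ → X) (x y : X) : Prop :=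
  γ 0 = x ∧ γ (dist x y) = y ∧ IsGeodesicParam γ 0 (dist x y)

/-- A geodesic metric space: any two points are joined by a geodesic. -/
def GeodesicSpace (X : Type*) [MetricSpace X] : Prop :=
  ∀ x y : X, ∃ γ : ℝ → X, IsGeodesicBetween γ x y

/-- A geodesic space in which every geodesic triangle is `δ`-thin. -/
def GromovHyperbolic (X : Type*) [MetricSpace X] (δ : ℝ) : Prop :=
  GeodesicSpace X ∧
    ∀ (x y z : X) (γ₁ γ₂ γ₃ : ℝ → X),
      IsGeodesicBetween γ₁ x z → IsGeodesicBetween γ₂ x y → IsGeodesicBetween γ₃ y z →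
        ∀ t ∈ Set.Icc (0 : ℝ) (dist x z),
          ∃ u ∈ γ₂ '' Set.Icc (0 : ℝ) (dist x y) ∪ γ₃ '' Set.Icc (0 : ℝ) (dist y z),
            dist (γ₁ t) u ≤ δ

/-- A subset of `X` which is the image of a geodesic segment. -/
def IsGeodesicSegSet {X : Type*} [MetricSpace X] (A : Set X) : Prop :=
  ∃ (γ : ℝ → X) (a b : ℝ), a ≤ b ∧ IsGeodesicParam γ a b ∧ A = γ '' Set.Icc a b

/-- The set of nearest-point projections of `x` to `A`. -/
def nearestPts {X : Type*} [MetricSpace X] (A : Set X) (x : X) : Set X :=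
  {a ∈ A | dist x a = Metric.infDist x A}

/-- The nearest-point projection of the set `B` to `A`. -/
def projSet {X : Type*} [MetricSpace X] (A B : Set X) : Set X := ⋃ x ∈ B, nearestPts A x

/-- `diam_A(B)`, the diameter of the projection of `B` to `A`. -/
def projDiam {X : Type*} [MetricSpace X] (A B : Set X) : ℝ := Metric.diam (projSet A B)

/-- `d_A(B, C) = diam (π_A (B ∪ C))`. -/
def projDist {X : Type*} [MetricSpace X] (A B C : Set X) : ℝ := Metric.diam (projSet A (B ∪ C))

/-- The halfspace `H_half(x, y)` of points at least as close to `x` as to `y`. -/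
def halfspace {X : Type*} [MetricSpace X] (x y : X) : Set X := {z | dist z x ≤ dist z y}

/-- A group is virtually cyclic if it has a cyclic subgroup of finite index. -/
def VirtuallyCyclic (G : Type*) [Group G] : Prop :=
  ∃ H : Subgroup G, H.FiniteIndex ∧ IsCyclic H

/-- The WPD property for `f` relative to the basepoint `x₀`. -/
def WPD {G : Type*} [Group G] {X : Type*} [MetricSpace X] [MulAction G X]
    (f : G) (x₀ : X) : Prop :=
  ∀ R : ℝ, 0 < R → ∃ L : ℕ, 0 < L ∧
    {g : G | dist x₀ (g • x₀) < R ∧ dist ((f ^ L) • x₀) ((g * f ^ L) • x₀) < R}.Finite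

/-- The word norm with respect to the generating set `S`. -/
def wordNorm {G : Type*} [Group G] (S : Finset G) (g : G) : ℕ :=
  sInf {n : ℕ | ∃ l : List G, l.length = n ∧ (∀ x ∈ l, x ∈ S ∨ x⁻¹ ∈ S) ∧ l.prod = g}

/-- The word metric with respect to the generating set `S`. -/
def wordDist {G : Type*} [Group G] (S : Finset G) (g h : G) : ℕ := wordNorm S (g⁻¹ * h)

/-- `B` is an `r`-roughly branching subset of `G`. -/
def RoughlyBranching {G : Type*} [Group G] (S : Finset G) (r : ℝ) (B : Set G) : Prop :=
  ∃ B' : Set G,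
    (∀ b ∈ B, ∃ b' ∈ B', (wordDist S b b' : ℝ) ≤ r) ∧
    ∀ k : ℕ, 1 ≤ k → ∀ g h : Fin k → G, (∀ i, g i ∈ B') → (∀ i, h i ∈ B') →
      (List.ofFn g).prod = (List.ofFn h).prod → g = h


section Aux
variable {X : Type*} [MetricSpace X]

section helpers

lemma my_le_infDist {s : Set X} {x : X} (hs : s.Nonempty) {c : ℝ}
    (h : ∀ y ∈ s, c ≤ dist x y) : c ≤ infDist x s := by
  by_contra hc
  push_neg at hc
  obtain ⟨y, hy, hlt⟩ := (infDist_lt_iff hs).1 hc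
  exact absurd (h y hy) (by linarith)

lemma lineSeg {m : ℝ → X} (hm : ∀ s t, dist (m s) (m t) = |s - t|) (s₀ s₁ : ℝ) :
    ∃ g : ℝ → X, IsGeodesicBetween g (m s₀) (m s₁) ∧ ∀ t, g t ∈ Set.range m := by
  set σ : ℝ := if s₀ ≤ s₁ then 1 else -1 with hσ
  have hσ1 : |σ| = 1 := by
    simp only [hσ]; split <;> norm_num
  refine ⟨fun t => m (s₀ + σ * t), ⟨by simp, ?_, ?_⟩, fun t => Set.mem_range_self _⟩
  · have hd : dist (m s₀) (m s₁) = |s₁ - s₀| := by rw [hm]; rw [abs_sub_comm]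
    rw [hd]
    simp only [hσ]
    split
    · rename_i h
      rw [abs_of_nonneg (by linarith)]; ring_nf
    · rename_i h
      rw [abs_of_nonpos (by linarith)]; ring_nf
  · intro s _ t _
    rw [hm]
    have : s₀ + σ * s - (s₀ + σ * t) = σ * (s - t) := by ring
    rw [this, abs_mul, hσ1, one_mul]

def clamp (γ : ℝ → X) (D : ℝ) : ℝ → X := fun t => γ (max 0 (min t D))

lemma clamp_eq {γ : ℝ → X} {D : ℝ} {t : ℝ} (ht : t ∈ Icc 0 D) : clamp γ D t = γ t := by
  simp only [clamp, min_eq_left ht.2, max_eq_right ht.1]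

lemma clamp_lipschitz {γ : ℝ → X} {D : ℝ} (hD : 0 ≤ D) (hγ : IsGeodesicParam γ 0 D) :
    LipschitzWith 1 (clamp γ D) := by
  refine LipschitzWith.of_dist_le_mul fun s t => ?_
  have hs : max 0 (min s D) ∈ Icc 0 D := ⟨le_max_left _ _, max_le (by linarith) (min_le_right _ _)⟩
  have ht : max 0 (min t D) ∈ Icc 0 D := ⟨le_max_left _ _, max_le (by linarith) (min_le_right _ _)⟩
  rw [clamp, clamp, hγ _ hs _ ht, NNReal.coe_one, one_mul, Real.dist_eq]
  calc |max 0 (min s D) - max 0 (min t D)|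
      ≤ max |(0:ℝ) - 0| |min s D - min t D| := abs_max_sub_max_le_max _ _ _ _
    _ = |min s D - min t D| := by simp [abs_nonneg]
    _ ≤ max |s - t| |D - D| := abs_min_sub_min_le_max _ _ _ _
    _ = |s - t| := by simp [abs_nonneg]

lemma geo_continuousOn {γ : ℝ → X} {x y : X} (h : IsGeodesicBetween γ x y) :
    ContinuousOn γ (Icc 0 (dist x y)) :=
  ContinuousOn.congr ((clamp_lipschitz dist_nonneg h.2.2).continuous.continuousOn)
    (fun t ht => (clamp_eq ht).symm)

lemma geo_image_compact {γ : ℝ → X} {x y : X} (h : IsGeodesicBetween γ x y) :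
    IsCompact (γ '' Icc 0 (dist x y)) :=
  isCompact_Icc.image_of_continuousOn (geo_continuousOn h)

lemma exists_nearest {m : ℝ → X} (hm : ∀ s t, dist (m s) (m t) = |s - t|) (x : X) :
    ∃ p, p ∈ nearestPts (Set.range m) x := by
  set g : ℝ → ℝ := fun t => dist x (m t) with hg
  have hlip : LipschitzWith 1 m := by
    refine LipschitzWith.of_dist_le_mul fun s t => ?_
    rw [hm s t, Real.dist_eq]; norm_num
  have hcont : Continuous g := Continuous.dist continuous_const hlip.continuous
  set R : ℝ := 2 * g 0 + 1 with hR
  have hg0 : (0:ℝ) ≤ g 0 := dist_nonneg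
  have hne : (Icc (-R) R).Nonempty := ⟨0, by constructor <;> simp only [hR] <;> linarith⟩
  obtain ⟨t₀, ht₀mem, ht₀⟩ := isCompact_Icc.exists_isMinOn hne hcont.continuousOn
  have hmin : ∀ t : ℝ, g t₀ ≤ g t := by
    intro t
    by_cases ht : t ∈ Icc (-R) R
    · exact ht₀ ht
    · have habs : R < |t| := by
        simp only [Icc, mem_setOf_eq, not_and_or, not_le] at ht
        rcases ht with h | h
        · rw [abs_of_neg (by linarith : t < 0)]; linarith
        · rw [abs_of_pos (by linarith : 0 < t)]; linarith
      have h1 : |t| = dist (m t) (m 0) := by rw [hm]; simp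
      have h2 : dist (m t) (m 0) ≤ g t + g 0 := by
        have := dist_triangle (m t) x (m 0)
        simpa [hg, dist_comm] using this
      have h3 : g t₀ ≤ g 0 := ht₀ (⟨by simp only [hR]; linarith, by simp only [hR]; linarith⟩ :
        (0:ℝ) ∈ Icc (-R) R)
      linarith [dist_nonneg (x := x) (y := m t)]
  refine ⟨m t₀, ⟨mem_range_self _, ?_⟩⟩
  refine le_antisymm ?_ (infDist_le_dist_of_mem (mem_range_self _))
  refine my_le_infDist ⟨m 0, mem_range_self 0⟩ ?_
  rintro y ⟨t, rfl⟩
  exact hmin t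

end helpers

section lemA

/-- Lemma A: the nearest-point projection is a coarse "entry point":
`d(x,a) ≥ d(x,p) + d(p,a) - 6δ` for `a` on the line and `p` a nearest point. -/
lemma lemA {δ : ℝ} (hδ : 0 ≤ δ) (hX : GromovHyperbolic X δ)
    {m : ℝ → X} (hm : ∀ s t, dist (m s) (m t) = |s - t|)
    {x p a : X} (hp : p ∈ nearestPts (Set.range m) x) (ha : a ∈ Set.range m) :
    dist x p + dist p a - 6*δ ≤ dist x a := by
  obtain ⟨γ₁, hγ₁⟩ := hX.1 x a
  obtain ⟨γ₂, hγ₂⟩ := hX.1 x p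
  obtain ⟨sp, hsp⟩ := hp.1
  obtain ⟨sa, hsa⟩ := ha
  obtain ⟨γ₃, hγ₃, hγ₃mem⟩ := lineSeg hm sp sa
  rw [hsp, hsa] at hγ₃
  set D := dist x a with hD
  set Lp := dist x p with hLp
  set La := dist p a with hLa
  set K₂ := γ₂ '' Icc 0 Lp with hK₂
  set K₃ := γ₃ '' Icc 0 La with hK₃
  have hK₂c : IsCompact K₂ := geo_image_compact hγ₂
  have hK₃c : IsCompact K₃ := geo_image_compact hγ₃
  have hK₃m : K₃ ⊆ Set.range m := by rintro v ⟨t, _, rfl⟩; exact hγ₃mem t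
  have thin := hX.2 x p a γ₁ γ₂ γ₃ hγ₁ hγ₂ hγ₃
  set gb : ℝ → X := clamp γ₁ D with hgb
  have hgblip : LipschitzWith 1 gb := clamp_lipschitz dist_nonneg hγ₁.2.2
  set S : Set ℝ := Icc 0 D ∩ {t | infDist (gb t) K₂ ≤ δ} with hS
  have hScl : IsClosed S := by
    exact isClosed_Icc.inter (isClosed_le ((continuous_infDist_pt K₂).comp hgblip.continuous) continuous_const)
  have hK₂ne : K₂.Nonempty := ⟨γ₂ 0, ⟨0, ⟨le_refl _, dist_nonneg⟩, rfl⟩⟩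
  have h0S : (0:ℝ) ∈ S := by
    constructor
    · exact ⟨le_refl _, dist_nonneg⟩
    · have h1 : gb 0 = x := by
        rw [hgb, clamp_eq ⟨le_refl _, dist_nonneg⟩, hγ₁.1]
      have h2 : x ∈ K₂ := ⟨0, ⟨le_refl _, dist_nonneg⟩, hγ₂.1⟩
      simp only [mem_setOf_eq, h1]
      calc infDist x K₂ ≤ dist x x := infDist_le_dist_of_mem h2
        _ = 0 := dist_self x
        _ ≤ δ := hδ
  have hSbdd : BddAbove S := ⟨D, fun t ht => ht.1.2⟩
  set T := sSup S with hT
  have hTS : T ∈ S := hScl.csSup_mem ⟨0, h0S⟩ hSbdd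
  have hTmem : T ∈ Icc 0 D := hTS.1
  -- point u on [x,p] close to γ₁ T
  obtain ⟨u, huK, hud⟩ := hK₂c.exists_infDist_eq_dist hK₂ne (gb T)
  have huδ : dist (γ₁ T) u ≤ δ := by
    have := hTS.2
    rw [mem_setOf_eq, hud] at this
    rwa [hgb, clamp_eq hTmem] at this
  -- point v on [p,a] ⊆ A close to γ₁ T
  have hv : ∃ v ∈ K₃, dist (γ₁ T) v ≤ δ := by
    by_cases hTD : T = D
    · refine ⟨a, ⟨La, ⟨dist_nonneg, le_refl _⟩, hγ₃.2.1⟩, ?_⟩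
      rw [hTD, hγ₁.2.1, dist_self]; exact hδ
    · have hTD' : T < D := lt_of_le_of_ne hTmem.2 hTD
      set S' : Set ℝ := Icc 0 D ∩ {t | infDist (gb t) K₃ ≤ δ} with hS'
      have hS'cl : IsClosed S' := by
        exact isClosed_Icc.inter (isClosed_le ((continuous_infDist_pt K₃).comp hgblip.continuous) continuous_const)
      have hsub : Ioc T D ⊆ S' := by
        intro t ht
        have htIcc : t ∈ Icc 0 D := ⟨le_trans hTmem.1 (le_of_lt ht.1), ht.2⟩
        have htnS : t ∉ S := fun hts => absurd (le_csSup hSbdd hts) (not_le.2 ht.1)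
        obtain ⟨w, hw, hwd⟩ := thin t htIcc
        rcases hw with hw2 | hw3
        · exfalso
          refine htnS ⟨htIcc, ?_⟩
          simp only [mem_setOf_eq]
          rw [hgb, clamp_eq htIcc]
          calc infDist (γ₁ t) K₂ ≤ dist (γ₁ t) w := infDist_le_dist_of_mem hw2
            _ ≤ δ := hwd
        · refine ⟨htIcc, ?_⟩
          simp only [mem_setOf_eq]
          rw [hgb, clamp_eq htIcc]
          calc infDist (γ₁ t) K₃ ≤ dist (γ₁ t) w := infDist_le_dist_of_mem hw3
            _ ≤ δ := hwd
      have hTcl : T ∈ closure (Ioc T D) := by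
        rw [closure_Ioc (ne_of_lt hTD')]
        exact ⟨le_refl _, le_of_lt hTD'⟩
      have hTS' : T ∈ S' := hS'cl.closure_subset ((closure_mono hsub) hTcl)
      have hK₃ne : K₃.Nonempty := ⟨γ₃ 0, ⟨0, ⟨le_refl _, dist_nonneg⟩, rfl⟩⟩
      obtain ⟨v, hvK, hvd⟩ := hK₃c.exists_infDist_eq_dist hK₃ne (gb T)
      refine ⟨v, hvK, ?_⟩
      have := hTS'.2
      rw [mem_setOf_eq, hvd] at this
      rwa [hgb, clamp_eq hTmem] at this
  obtain ⟨v, hvK, hvδ⟩ := hv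
  -- computations
  obtain ⟨c, hc, rfl⟩ := huK
  have hxu : dist x (γ₂ c) = c := by
    have := hγ₂.2.2 0 ⟨le_refl _, dist_nonneg⟩ c hc
    rw [hγ₂.1] at this
    rw [this, zero_sub, abs_neg, abs_of_nonneg hc.1]
  have hup : dist (γ₂ c) p = Lp - c := by
    have := hγ₂.2.2 c hc Lp ⟨dist_nonneg, le_refl _⟩
    rw [hγ₂.2.1] at this
    rw [this, abs_of_nonpos (by linarith [hc.2]), neg_sub]
  have hxv : Lp ≤ dist x v := by
    rw [hLp, hp.2]
    exact infDist_le_dist_of_mem (hK₃m hvK)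
  have huv : dist (γ₂ c) v ≤ 2*δ := by
    calc dist (γ₂ c) v ≤ dist (γ₂ c) (γ₁ T) + dist (γ₁ T) v := dist_triangle _ _ _
      _ ≤ δ + δ := add_le_add (by rwa [dist_comm] at huδ) hvδ
      _ = 2*δ := by ring
  have hLpc : Lp - c ≤ 2*δ := by
    have : dist x v ≤ c + 2*δ := by
      calc dist x v ≤ dist x (γ₂ c) + dist (γ₂ c) v := dist_triangle _ _ _
        _ ≤ c + 2*δ := by rw [hxu]; linarith
    linarith
  have hTp : dist (γ₁ T) p ≤ 3*δ := by
    calc dist (γ₁ T) p ≤ dist (γ₁ T) (γ₂ c) + dist (γ₂ c) p := dist_triangle _ _ _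
      _ ≤ δ + (Lp - c) := add_le_add huδ (le_of_eq hup)
      _ ≤ 3*δ := by linarith
  have hxT : dist x (γ₁ T) = T := by
    have := hγ₁.2.2 0 ⟨le_refl _, dist_nonneg⟩ T hTmem
    rw [hγ₁.1] at this
    rw [this, zero_sub, abs_neg, abs_of_nonneg hTmem.1]
  have hTa : dist (γ₁ T) a = D - T := by
    have := hγ₁.2.2 T hTmem D ⟨dist_nonneg, le_refl _⟩
    rw [hγ₁.2.1] at this
    rw [this, abs_of_nonpos (by linarith [hTmem.2]), neg_sub]
  have h1 : Lp - 3*δ ≤ T := by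
    have := dist_triangle x (γ₁ T) p
    rw [hxT] at this
    rw [hLp] at *
    linarith
  have h2 : La - 3*δ ≤ D - T := by
    have h := dist_triangle p (γ₁ T) a
    rw [hTa] at h
    have h' : dist p (γ₁ T) = dist (γ₁ T) p := dist_comm _ _
    simp only [hLa]
    linarith
  linarith

end lemA

section lemB

lemma geo_dist_left {γ : ℝ → X} {x y : X} (h : IsGeodesicBetween γ x y)
    {t : ℝ} (ht : t ∈ Icc 0 (dist x y)) : dist x (γ t) = t := by
  have := h.2.2 0 ⟨le_refl _, dist_nonneg⟩ t ht
  rw [h.1] at this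
  rw [this, zero_sub, abs_neg, abs_of_nonneg ht.1]

lemma geo_dist_right {γ : ℝ → X} {x y : X} (h : IsGeodesicBetween γ x y)
    {t : ℝ} (ht : t ∈ Icc 0 (dist x y)) : dist (γ t) y = dist x y - t := by
  have := h.2.2 t ht (dist x y) ⟨dist_nonneg, le_refl _⟩
  rw [h.2.1] at this
  rw [this, abs_of_nonpos (by linarith [ht.2]), neg_sub]

lemma geo_dist_two {γ : ℝ → X} {x y : X} (h : IsGeodesicBetween γ x y)
    {s t : ℝ} (hs : s ∈ Icc 0 (dist x y)) (ht : t ∈ Icc 0 (dist x y)) (hst : s ≤ t) :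
    dist (γ s) (γ t) = t - s := by
  rw [h.2.2 s hs t ht, abs_of_nonpos (by linarith), neg_sub]

/-- points on a geodesic from `x` to a nearest point `p` also have `p` as nearest point -/
lemma nearest_on_geo {m : ℝ → X} {γ : ℝ → X} {x p : X}
    (hp : p ∈ nearestPts (Set.range m) x) (hγ : IsGeodesicBetween γ x p)
    {c : ℝ} (hc : c ∈ Icc 0 (dist x p)) : p ∈ nearestPts (Set.range m) (γ c) := by
  refine ⟨hp.1, ?_⟩
  have h1 : dist (γ c) p = dist x p - c := geo_dist_right hγ hc
  have h2 : dist x (γ c) = c := geo_dist_left hγ hc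
  refine le_antisymm ?_ ?_
  · rw [h1]
    refine my_le_infDist ⟨p, hp.1⟩ fun a ha => ?_
    have h3 : dist x p ≤ dist x a := by
      rw [hp.2]; exact infDist_le_dist_of_mem ha
    have h4 := dist_triangle x (γ c) a
    linarith
  · exact infDist_le_dist_of_mem hp.1

/-- Lemma B: if the projections of `x` and `y` are far apart on the line, a geodesic from
`x` to `y` passes near both projections. -/
lemma lemB {δ : ℝ} (hδ : 0 ≤ δ) (hX : GromovHyperbolic X δ)
    {m : ℝ → X} (hm : ∀ s t, dist (m s) (m t) = |s - t|)
    {x y p q : X} (hp : p ∈ nearestPts (Set.range m) x) (hq : q ∈ nearestPts (Set.range m) y)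
    (hpq : 9*δ < dist p q) :
    dist x p + dist p q + dist q y - 46*δ ≤ dist x y := by
  obtain ⟨γ, hγ⟩ := hX.1 x y
  obtain ⟨α, hα⟩ := hX.1 x p
  obtain ⟨β, hβ⟩ := hX.1 q y
  obtain ⟨η, hη⟩ := hX.1 p y
  obtain ⟨sp, hsp⟩ := hp.1
  obtain ⟨sq, hsq⟩ := hq.1
  obtain ⟨pq, hpqg, hpqmem⟩ := lineSeg hm sp sq
  rw [hsp, hsq] at hpqg
  set D := dist x y with hD
  set La := dist x p with hLa
  set Lb := dist q y with hLb
  set dpq := dist p q with hdpq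
  set Ka := α '' Icc 0 La with hKa
  set Kb := β '' Icc 0 Lb with hKb
  set Kpq := pq '' Icc 0 dpq with hKpq
  have hKac : IsCompact Ka := geo_image_compact hα
  have hKbc : IsCompact Kb := geo_image_compact hβ
  have hKane : Ka.Nonempty := ⟨α 0, ⟨0, ⟨le_refl _, dist_nonneg⟩, rfl⟩⟩
  have hKbne : Kb.Nonempty := ⟨β 0, ⟨0, ⟨le_refl _, dist_nonneg⟩, rfl⟩⟩
  -- nearest point facts along Ka and Kb
  have hanear : ∀ w ∈ Ka, p ∈ nearestPts (Set.range m) w := by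
    rintro w ⟨c, hc, rfl⟩
    exact nearest_on_geo hp hα hc
  have hbnear : ∀ w ∈ Kb, q ∈ nearestPts (Set.range m) w := by
    rintro w ⟨c, hc, rfl⟩
    have h1 : dist (β c) q = c := by rw [dist_comm]; exact geo_dist_left hβ hc
    refine ⟨hq.1, ?_⟩
    refine le_antisymm ?_ (infDist_le_dist_of_mem hq.1)
    rw [h1]
    refine my_le_infDist ⟨q, hq.1⟩ fun a ha => ?_
    have h3 : dist y q ≤ dist y a := by
      rw [hq.2]; exact infDist_le_dist_of_mem ha
    have h2 : dist (β c) y = Lb - c := geo_dist_right hβ hc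
    have h4 := dist_triangle y (β c) a
    have h5 : dist y (β c) = Lb - c := by rw [dist_comm]; exact h2
    have h6 : dist y q = Lb := by rw [dist_comm]
    linarith
  -- separation between Ka and Kb
  have hsep : ∀ u ∈ Ka, ∀ e ∈ Kb, dpq - 6*δ ≤ dist u e := by
    intro u hu e he
    have h1 := lemA hδ hX hm (hanear u hu) hq.1
    have h2 := lemA hδ hX hm (hbnear e he) hp.1
    have t1 := dist_triangle u e q
    have t2 := dist_triangle e u p
    have c1 : dist e q = dist q e := dist_comm _ _
    have c2 : dist u p = dist p u := dist_comm _ _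
    have c3 : dist q p = dist p q := dist_comm _ _
    have c4 : dist e u = dist u e := dist_comm _ _
    simp only [hdpq]
    linarith
  have thin1 := hX.2 x p y γ α η hγ hα hη
  have thin2 := hX.2 p q y η pq β hη hpqg hβ
  set gb : ℝ → X := clamp γ D with hgb
  have hgblip : LipschitzWith 1 gb := clamp_lipschitz dist_nonneg hγ.2.2
  -- trichotomy
  have htri : ∀ t ∈ Icc 0 D, (infDist (gb t) Ka ≤ δ) ∨
      (∃ cc ∈ Kpq, dist (γ t) cc ≤ 2*δ) ∨ (infDist (gb t) Kb ≤ 2*δ) := by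
    intro t ht
    obtain ⟨w, hw, hwd⟩ := thin1 t ht
    rcases hw with hw1 | hw2
    · left
      rw [hgb, clamp_eq ht]
      exact le_trans (infDist_le_dist_of_mem hw1) hwd
    · obtain ⟨s, hs, rfl⟩ := hw2
      obtain ⟨v, hv, hvd⟩ := thin2 s hs
      rcases hv with hv1 | hv2
      · right; left
        exact ⟨v, hv1, le_trans (dist_triangle _ _ _) (by linarith)⟩
      · right; right
        rw [hgb, clamp_eq ht]
        calc infDist (γ t) Kb ≤ dist (γ t) v := infDist_le_dist_of_mem hv2
          _ ≤ dist (γ t) (η s) + dist (η s) v := dist_triangle _ _ _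
          _ ≤ 2*δ := by linarith
  set S₁ : Set ℝ := Icc 0 D ∩ {t | infDist (gb t) Ka ≤ δ} with hS₁
  set S₃ : Set ℝ := Icc 0 D ∩ {t | infDist (gb t) Kb ≤ 2*δ} with hS₃
  have hS₁cl : IsClosed S₁ := isClosed_Icc.inter
    (isClosed_le ((continuous_infDist_pt Ka).comp hgblip.continuous) continuous_const)
  have hS₃cl : IsClosed S₃ := isClosed_Icc.inter
    (isClosed_le ((continuous_infDist_pt Kb).comp hgblip.continuous) continuous_const)
  have h0S₁ : (0:ℝ) ∈ S₁ := by
    refine ⟨⟨le_refl _, dist_nonneg⟩, ?_⟩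
    have h1 : gb 0 = x := by rw [hgb, clamp_eq ⟨le_refl _, dist_nonneg⟩, hγ.1]
    have h2 : x ∈ Ka := ⟨0, ⟨le_refl _, dist_nonneg⟩, hα.1⟩
    simp only [mem_setOf_eq, h1]
    calc infDist x Ka ≤ dist x x := infDist_le_dist_of_mem h2
      _ ≤ δ := by rw [dist_self]; exact hδ
  have hDS₃ : D ∈ S₃ := by
    refine ⟨⟨dist_nonneg, le_refl _⟩, ?_⟩
    have h1 : gb D = y := by rw [hgb, clamp_eq ⟨dist_nonneg, le_refl _⟩, hγ.2.1]
    have h2 : y ∈ Kb := ⟨Lb, ⟨dist_nonneg, le_refl _⟩, hβ.2.1⟩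
    simp only [mem_setOf_eq, h1]
    calc infDist y Kb ≤ dist y y := infDist_le_dist_of_mem h2
      _ ≤ 2*δ := by rw [dist_self]; linarith
  -- the two switch points
  set T' := sInf S₃ with hT'
  have hS₃bdd : BddBelow S₃ := ⟨0, fun t ht => ht.1.1⟩
  have hT'S₃ : T' ∈ S₃ := hS₃cl.csInf_mem ⟨D, hDS₃⟩ hS₃bdd
  have hT'mem : T' ∈ Icc 0 D := hT'S₃.1
  set S₁' := S₁ ∩ Icc 0 T' with hS₁'
  have h0S₁' : (0:ℝ) ∈ S₁' := ⟨h0S₁, ⟨le_refl _, hT'mem.1⟩⟩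
  have hS₁'cl : IsClosed S₁' := hS₁cl.inter isClosed_Icc
  have hS₁'bdd : BddAbove S₁' := ⟨T', fun t ht => ht.2.2⟩
  set T := sSup S₁' with hT
  have hTS₁' : T ∈ S₁' := hS₁'cl.csSup_mem ⟨0, h0S₁'⟩ hS₁'bdd
  have hTmem : T ∈ Icc 0 D := hTS₁'.1.1
  have hTT' : T ≤ T' := hTS₁'.2.2
  -- nearby points at the switch times
  obtain ⟨u₁, hu₁K, hu₁d⟩ := hKac.exists_infDist_eq_dist hKane (gb T)
  have hu₁ : dist (γ T) u₁ ≤ δ := by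
    have := hTS₁'.1.2
    rw [mem_setOf_eq, hu₁d] at this
    rwa [hgb, clamp_eq hTmem] at this
  obtain ⟨e₁, he₁K, he₁d⟩ := hKbc.exists_infDist_eq_dist hKbne (gb T')
  have he₁ : dist (γ T') e₁ ≤ 2*δ := by
    have := hT'S₃.2
    rw [mem_setOf_eq, he₁d] at this
    rwa [hgb, clamp_eq hT'mem] at this
  -- the gap is at least dpq - 9δ
  have hgap : dpq - 9*δ ≤ T' - T := by
    have h1 := hsep u₁ hu₁K e₁ he₁K
    have h2 := dist_triangle u₁ (γ T) e₁
    have h3 := dist_triangle (γ T) (γ T') e₁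
    have h4 : dist (γ T) (γ T') = T' - T := geo_dist_two hγ hTmem hT'mem hTT'
    have h5 : dist u₁ (γ T) = dist (γ T) u₁ := dist_comm _ _
    linarith
  have hM : 0 < T' - T := by linarith
  -- middle points are close to the segment [p,q] on the line
  have hmid : ∀ ε : ℝ, 0 < ε → ε < (T' - T)/2 →
      La + dpq + Lb - 46*δ - 4*ε ≤ D := by
    intro ε hε hε2
    set ta := T + ε with hta
    set tb := T' - ε with htb
    have htamem : ta ∈ Icc 0 D := ⟨by linarith [hTmem.1], by linarith [hT'mem.2]⟩
    have htbmem : tb ∈ Icc 0 D := ⟨by linarith [hTmem.1], by linarith [hT'mem.2]⟩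
    have htaS₂ : ∃ cc ∈ Kpq, dist (γ ta) cc ≤ 2*δ := by
      rcases htri ta htamem with h | h | h
      · exfalso
        have : ta ∈ S₁' := ⟨⟨htamem, h⟩, ⟨by linarith [hTmem.1], by linarith⟩⟩
        have := le_csSup hS₁'bdd this
        simp only [hta] at this; linarith [this]
      · exact h
      · exfalso
        have : ta ∈ S₃ := ⟨htamem, h⟩
        have := csInf_le hS₃bdd this
        simp only [hta] at this; linarith [this]
    have htbS₂ : ∃ cc ∈ Kpq, dist (γ tb) cc ≤ 2*δ := by
      rcases htri tb htbmem with h | h | h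
      · exfalso
        have : tb ∈ S₁' := ⟨⟨htbmem, h⟩, ⟨by linarith [hTmem.1], by linarith⟩⟩
        have := le_csSup hS₁'bdd this
        simp only [htb] at this; linarith [this]
      · exact h
      · exfalso
        have : tb ∈ S₃ := ⟨htbmem, h⟩
        have := csInf_le hS₃bdd this
        simp only [htb] at this; linarith [this]
    obtain ⟨ca, hcaK, hcad⟩ := htaS₂
    obtain ⟨cb, hcbK, hcbd⟩ := htbS₂
    obtain ⟨la, hla, rfl⟩ := hcaK
    obtain ⟨lb, hlb, rfl⟩ := hcbK
    have hpca : dist p (pq la) = la := geo_dist_left hpqg hla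
    have hcaq : dist (pq la) q = dpq - la := geo_dist_right hpqg hla
    have hpcb : dist p (pq lb) = lb := geo_dist_left hpqg hlb
    have hcbq : dist (pq lb) q = dpq - lb := geo_dist_right hpqg hlb
    -- dist (γ ta) p is small
    have hTta : dist (γ T) (γ ta) = ε := by
      have := geo_dist_two hγ hTmem htamem (by linarith)
      rw [this]; simp [hta]
    have hu₁ca : dist u₁ (pq la) ≤ 3*δ + ε := by
      calc dist u₁ (pq la) ≤ dist u₁ (γ T) + dist (γ T) (γ ta) + dist (γ ta) (pq la) :=
            dist_triangle4 _ _ _ _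
        _ ≤ δ + ε + 2*δ := by
            have h5 : dist u₁ (γ T) = dist (γ T) u₁ := dist_comm _ _
            linarith
        _ = 3*δ + ε := by ring
    have hla9 : la ≤ 9*δ + ε := by
      have := lemA hδ hX hm (hanear u₁ hu₁K) (hpqmem la)
      have h6 : dist p (pq la) ≤ dist p u₁ + dist u₁ (pq la) := dist_triangle _ _ _
      have h7 : (0:ℝ) ≤ dist u₁ p := dist_nonneg
      have c2 : dist u₁ p = dist p u₁ := dist_comm _ _
      rw [hpca] at h6
      linarith
    have hgtap : dist (γ ta) p ≤ 11*δ + ε := by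
      have := dist_triangle (γ ta) (pq la) p
      have c1 : dist (pq la) p = dist p (pq la) := dist_comm _ _
      linarith
    -- dist (γ tb) q is small
    have hT'tb : dist (γ tb) (γ T') = ε := by
      have := geo_dist_two hγ htbmem hT'mem (by linarith)
      rw [this]; simp [htb]
    have he₁cb : dist e₁ (pq lb) ≤ 4*δ + ε := by
      calc dist e₁ (pq lb) ≤ dist e₁ (γ T') + dist (γ T') (γ tb) + dist (γ tb) (pq lb) :=
            dist_triangle4 _ _ _ _
        _ ≤ 2*δ + ε + 2*δ := by
            have h5 : dist e₁ (γ T') = dist (γ T') e₁ := dist_comm _ _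
            have h6 : dist (γ T') (γ tb) = dist (γ tb) (γ T') := dist_comm _ _
            linarith
        _ = 4*δ + ε := by ring
    have hlb10 : dpq - lb ≤ 10*δ + ε := by
      have := lemA hδ hX hm (hbnear e₁ he₁K) (hpqmem lb)
      have h6 : dist q (pq lb) ≤ dist q e₁ + dist e₁ (pq lb) := dist_triangle _ _ _
      have h7 : (0:ℝ) ≤ dist e₁ q := dist_nonneg
      have c2 : dist e₁ q = dist q e₁ := dist_comm _ _
      have c3 : dist q (pq lb) = dist (pq lb) q := dist_comm _ _
      rw [c3, hcbq] at h6
      linarith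
    have hgtbq : dist (γ tb) q ≤ 12*δ + ε := by
      have := dist_triangle (γ tb) (pq lb) q
      linarith
    -- put the three pieces together
    have e1 : dist x (γ ta) = ta := geo_dist_left hγ htamem
    have e2 : dist (γ ta) (γ tb) = tb - ta := geo_dist_two hγ htamem htbmem (by linarith)
    have e3 : dist (γ tb) y = D - tb := geo_dist_right hγ htbmem
    have f1 : La - (11*δ + ε) ≤ ta := by
      have := dist_triangle x (γ ta) p
      rw [e1] at this
      simp only [hLa] at *
      linarith
    have f2 : dpq - (11*δ + ε) - (12*δ + ε) ≤ tb - ta := by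
      have t1 := dist_triangle p (γ ta) (γ tb)
      have t2 := dist_triangle (γ ta) (γ tb) q
      have t3 := dist_triangle p (γ ta) q
      have c1 : dist p (γ ta) = dist (γ ta) p := dist_comm _ _
      have hdp : dpq ≤ dist p (γ ta) + dist (γ ta) q := dist_triangle p (γ ta) q
      have hgq : dist (γ ta) q ≤ dist (γ ta) (γ tb) + dist (γ tb) q := dist_triangle _ _ _
      rw [e2] at hgq
      linarith
    have f3 : Lb - (12*δ + ε) ≤ D - tb := by
      have := dist_triangle q (γ tb) y
      rw [e3] at this
      have c1 : dist q (γ tb) = dist (γ tb) q := dist_comm _ _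
      simp only [hLb] at *
      linarith
    have hsum : ta + (tb - ta) + (D - tb) = D := by ring
    linarith
  -- let ε → 0
  by_contra hcon
  push_neg at hcon
  set slack := La + dpq + Lb - 46*δ - D with hslack
  have hslackpos : 0 < slack := by simp only [hslack]; linarith
  set ε := min ((T' - T)/4) (slack/8) with hε
  have hεpos : 0 < ε := lt_min (by linarith) (by linarith)
  have hεlt : ε < (T' - T)/2 := lt_of_le_of_lt (min_le_left _ _) (by linarith)
  have := hmid ε hεpos hεlt
  have hεle : ε ≤ slack/8 := min_le_right _ _
  simp only [hslack] at hεle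
  linarith

end lemB

section projMachinery

lemma mem_projSet_of {A B : Set X} {b w : X} (hb : b ∈ B) (hw : w ∈ nearestPts A b) :
    w ∈ projSet A B := Set.mem_biUnion hb hw

lemma projSet_cases {A B : Set X} {x₀ w : X} (h : w ∈ projSet A ({x₀} ∪ B)) :
    w ∈ nearestPts A x₀ ∨ w ∈ projSet A B := by
  simp only [projSet, Set.mem_iUnion, Set.mem_union, Set.mem_singleton_iff] at h ⊢
  obtain ⟨b, hb, hw⟩ := h
  rcases hb with rfl | hb
  · exact Or.inl hw
  · exact Or.inr ⟨b, hb, hw⟩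

lemma projSet_mono {A B B' : Set X} (h : B ⊆ B') : projSet A B ⊆ projSet A B' := by
  intro w hw
  simp only [projSet, Set.mem_iUnion] at hw ⊢
  obtain ⟨b, hb, hw⟩ := hw
  exact ⟨b, h hb, hw⟩

lemma nearestPts_bounded (A : Set X) (x : X) : Bornology.IsBounded (nearestPts A x) := by
  refine (Metric.isBounded_closedBall (x := x) (r := infDist x A)).subset fun a ha => ?_
  simp only [Metric.mem_closedBall, dist_comm]
  exact le_of_eq ha.2

lemma line_unbounded {m : ℝ → X} (hm : ∀ s t, dist (m s) (m t) = |s - t|) :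
    ¬ Bornology.IsBounded (Set.range m) := by
  intro h
  obtain ⟨C, hC⟩ := Metric.isBounded_iff.1 h
  have h0 : (0:ℝ) ≤ C := by
    have := hC (Set.mem_range_self 0) (Set.mem_range_self 0)
    rw [dist_self] at this
    exact this
  have := hC (Set.mem_range_self 0) (Set.mem_range_self (C+1))
  rw [hm] at this
  rw [abs_of_nonpos (by linarith)] at this
  linarith

/-- nearest-point sets on a line have diameter at most `6δ` (pairwise form) -/
lemma pt_pair {δ : ℝ} (hδ : 0 ≤ δ) (hX : GromovHyperbolic X δ)
    {m : ℝ → X} (hm : ∀ s t, dist (m s) (m t) = |s - t|) {x u v : X}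
    (hu : u ∈ nearestPts (Set.range m) x) (hv : v ∈ nearestPts (Set.range m) x) :
    dist u v ≤ 6*δ := by
  have := lemA hδ hX hm hu hv.1
  have h1 : dist x v = dist x u := by rw [hu.2, hv.2]
  linarith

/-- Lemma F (Behrstock-type inequality) -/
lemma lemF {δ B : ℝ} (hδ : 0 ≤ δ) (hX : GromovHyperbolic X δ)
    {mA mA' : ℝ → X} (hmA : ∀ s t, dist (mA s) (mA t) = |s - t|)
    (hmA' : ∀ s t, dist (mA' s) (mA' t) = |s - t|)
    (hpair : ∀ u ∈ projSet (Set.range mA) (Set.range mA'),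
      ∀ v ∈ projSet (Set.range mA) (Set.range mA'), dist u v ≤ B)
    {x p q r t : X} (hp : p ∈ nearestPts (Set.range mA) x)
    (hq : q ∈ nearestPts (Set.range mA') x)
    (hr : r ∈ projSet (Set.range mA) (Set.range mA'))
    (hpr : 52*δ + B < dist p r)
    (ht : t ∈ nearestPts (Set.range mA') p) : dist q t ≤ 9*δ := by
  obtain ⟨a, ha⟩ := exists_nearest hmA q
  have haproj : a ∈ projSet (Set.range mA) (Set.range mA') := mem_projSet_of hq.1 ha
  have har : dist a r ≤ B := hpair a haproj r hr
  have hpa : 52*δ < dist p a := by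
    have := dist_triangle p a r
    linarith
  by_contra hcon
  push_neg at hcon
  have hB := lemB hδ hX hmA' hq ht hcon
  have hA := lemA hδ hX hmA hp ha.1
  have tri1 : dist x a ≤ dist x q + dist q a := dist_triangle _ _ _
  have hqa : dist q a ≤ dist q p := by
    rw [ha.2]; exact infDist_le_dist_of_mem hp.1
  have tri2 : dist q p ≤ dist q t + dist t p := dist_triangle _ _ _
  linarith

/-- Lemma E: boundedness of the reverse projection -/
lemma lemE {δ B : ℝ} (hδ : 0 ≤ δ) (hX : GromovHyperbolic X δ)
    {mA mA' : ℝ → X} (hmA : ∀ s t, dist (mA s) (mA t) = |s - t|)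
    (hmA' : ∀ s t, dist (mA' s) (mA' t) = |s - t|)
    (hpair : ∀ u ∈ projSet (Set.range mA) (Set.range mA'),
      ∀ v ∈ projSet (Set.range mA) (Set.range mA'), dist u v ≤ B)
    {x₀ p q r : X} (hp : p ∈ nearestPts (Set.range mA) x₀)
    (hq : q ∈ nearestPts (Set.range mA') x₀)
    (hr : r ∈ projSet (Set.range mA) (Set.range mA')) :
    Bornology.IsBounded (projSet (Set.range mA') (Set.range mA)) := by
  have hB : 0 ≤ B := by
    have := hpair r hr r hr
    rw [dist_self] at this
    exact this
  set R : ℝ := dist x₀ p + dist p r + B + 101*δ with hR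
  refine (Metric.isBounded_closedBall (x := q) (r := R)).subset fun t htmem => ?_
  simp only [projSet, Set.mem_iUnion] at htmem
  obtain ⟨b, hb, ht⟩ := htmem
  simp only [Metric.mem_closedBall, dist_comm]
  obtain ⟨a, ha⟩ := exists_nearest hmA t
  have haproj : a ∈ projSet (Set.range mA) (Set.range mA') := mem_projSet_of ht.1 ha
  have har : dist a r ≤ B := hpair a haproj r hr
  have hpa : dist p a ≤ dist p r + B := by
    have := dist_triangle p r a
    have := dist_comm a r
    linarith [dist_triangle p r a, dist_comm r a]
  by_cases h1 : dist q t ≤ 9*δ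
  · have : (0:ℝ) ≤ dist x₀ p := dist_nonneg
    have : (0:ℝ) ≤ dist p r := dist_nonneg
    linarith
  · push_neg at h1
    have hα := lemB hδ hX hmA' hq ht h1
    by_cases h2 : dist a b ≤ 9*δ
    · have hxb : dist x₀ b ≤ dist x₀ p + dist p a + dist a b :=
        dist_triangle4 _ _ _ _
      have h3 : (0:ℝ) ≤ dist x₀ q := dist_nonneg
      have h4 : (0:ℝ) ≤ dist t b := dist_nonneg
      linarith
    · push_neg at h2
      have hbb : b ∈ nearestPts (Set.range mA) b :=
        ⟨hb, by rw [dist_self, Metric.infDist_zero_of_mem hb]⟩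
      have hβ := lemB hδ hX hmA ha hbb h2
      have hxb : dist x₀ b ≤ dist x₀ p + dist p a + dist a b :=
        dist_triangle4 _ _ _ _
      have h3 : (0:ℝ) ≤ dist x₀ q := dist_nonneg
      have h4 : (0:ℝ) ≤ dist t a := dist_nonneg
      have h5 : dist b b = 0 := dist_self b
      linarith

end projMachinery

section lemH

/-- The one-step nested projection lemma. -/
lemma lemH {δ K₀ : ℝ} (hδ : 0 ≤ δ) (hX : GromovHyperbolic X δ)
    {m₀ m₁ : ℝ → X} (hm₀ : ∀ s t, dist (m₀ s) (m₀ t) = |s - t|)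
    (hm₁ : ∀ s t, dist (m₁ s) (m₁ t) = |s - t|)
    (hK₀a : Set.range m₀ ≠ Set.range m₁ →
      Metric.diam (projSet (Set.range m₀) (Set.range m₁)) ≤ K₀)
    (hK₀b : Set.range m₀ ≠ Set.range m₁ →
      Metric.diam (projSet (Set.range m₁) (Set.range m₀)) ≤ K₀)
    (x₀ z : X)
    (h1 : 134*δ + 3*max K₀ 0 + 2 ≤
      Metric.diam (projSet (Set.range m₀) ({x₀} ∪ Set.range m₁)))
    (h2 : 74*δ + max K₀ 0 + 1 ≤
      Metric.diam (projSet (Set.range m₁) ({x₀} ∪ {z}))) :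
    Metric.diam (projSet (Set.range m₀) ({x₀} ∪ Set.range m₁)) - (60*δ + 2*max K₀ 0 + 1)
      ≤ Metric.diam (projSet (Set.range m₀) ({x₀} ∪ {z})) := by
  set B := max K₀ 0 with hBdef
  have hB : 0 ≤ B := le_max_right _ _
  have hK₀B : K₀ ≤ B := le_max_left _ _
  set A₀ := Set.range m₀ with hA₀
  set A₁ := Set.range m₁ with hA₁
  set d := Metric.diam (projSet A₀ ({x₀} ∪ A₁)) with hd
  by_cases hdsmall : d ≤ 60*δ + 2*B + 1
  · have := Metric.diam_nonneg (s := projSet A₀ ({x₀} ∪ {z}))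
    linarith
  push_neg at hdsmall
  have hdpos : 0 < d := by linarith
  -- the two lines are distinct
  have hne : A₀ ≠ A₁ := by
    intro heq
    have hsub : A₁ ⊆ projSet A₀ ({x₀} ∪ A₁) := by
      intro b hbmem
      refine mem_projSet_of (Set.mem_union_right _ hbmem) ?_
      rw [heq]
      exact ⟨hbmem, by rw [dist_self, Metric.infDist_zero_of_mem hbmem]⟩
    have hub : ¬ Bornology.IsBounded (projSet A₀ ({x₀} ∪ A₁)) := by
      intro hbd
      exact line_unbounded hm₁ (hbd.subset hsub)
    rw [hd, Metric.diam_eq_zero_of_unbounded hub] at hdpos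
    exact lt_irrefl _ hdpos
  -- the projection of A₁ onto A₀ is bounded
  have hbd1 : Bornology.IsBounded (projSet A₀ A₁) := by
    by_contra hub
    have hub' : ¬ Bornology.IsBounded (projSet A₀ ({x₀} ∪ A₁)) := by
      intro hbd
      exact hub (hbd.subset (projSet_mono Set.subset_union_right))
    rw [hd, Metric.diam_eq_zero_of_unbounded hub'] at hdpos
    exact lt_irrefl _ hdpos
  have pair0 : ∀ u ∈ projSet A₀ A₁, ∀ v ∈ projSet A₀ A₁, dist u v ≤ B := by
    intro u hu v hv
    calc dist u v ≤ Metric.diam (projSet A₀ A₁) := Metric.dist_le_diam_of_mem hbd1 hu hv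
      _ ≤ K₀ := hK₀a hne
      _ ≤ B := hK₀B
  -- choose projection points
  obtain ⟨p, hp⟩ := exists_nearest hm₀ x₀
  obtain ⟨q, hq⟩ := exists_nearest hm₁ x₀
  obtain ⟨s, hs⟩ := exists_nearest hm₁ z
  obtain ⟨pz, hpz⟩ := exists_nearest hm₀ z
  obtain ⟨r, hrn⟩ := exists_nearest hm₀ (m₁ 0)
  have hr : r ∈ projSet A₀ A₁ := mem_projSet_of (Set.mem_range_self 0) hrn
  obtain ⟨t₁, ht₁⟩ := exists_nearest hm₁ p
  have ht₁proj : t₁ ∈ projSet A₁ A₀ := mem_projSet_of hp.1 ht₁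
  -- d is controlled by dist p r
  have hdub : d ≤ 6*δ + dist p r + B := by
    rw [hd]
    refine Metric.diam_le_of_forall_dist_le (by positivity) fun w₁ hw₁ w₂ hw₂ => ?_
    have hw₁p : w₁ ∈ nearestPts A₀ x₀ → dist w₁ p ≤ 6*δ := fun h => pt_pair hδ hX hm₀ h hp
    have hw₂p : w₂ ∈ nearestPts A₀ x₀ → dist w₂ p ≤ 6*δ := fun h => pt_pair hδ hX hm₀ h hp
    rcases projSet_cases hw₁ with h₁ | h₁ <;> rcases projSet_cases hw₂ with h₂ | h₂
    · have := pt_pair hδ hX hm₀ h₁ h₂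
      have : dist w₁ w₂ ≤ 6*δ := pt_pair hδ hX hm₀ h₁ h₂
      have hpr0 : (0:ℝ) ≤ dist p r := dist_nonneg
      linarith
    · have d1 := hw₁p h₁
      have d2 := pair0 r hr w₂ h₂
      have := dist_triangle4 w₁ p r w₂
      have c1 : dist r w₂ = dist w₂ r := dist_comm _ _
      linarith
    · have d1 := hw₂p h₂
      have d2 := pair0 w₁ h₁ r hr
      have := dist_triangle4 w₂ p r w₁
      have c2 : dist w₂ w₁ = dist w₁ w₂ := dist_comm _ _
      have c1 : dist r w₁ = dist w₁ r := dist_comm _ _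
      linarith
    · have := pair0 w₁ h₁ w₂ h₂
      have hpr0 : (0:ℝ) ≤ dist p r := dist_nonneg
      linarith
  have hprlarge : 52*δ + B < dist p r := by linarith
  -- first Behrstock application: x₀ projects near the gate on A₁
  have hqt₁ : dist q t₁ ≤ 9*δ := lemF hδ hX hm₀ hm₁ pair0 hp hq hr hprlarge ht₁
  -- z projects far from x₀ on A₁
  have hqs : 62*δ + B + 1 ≤ dist q s := by
    have hub : Metric.diam (projSet A₁ ({x₀} ∪ {z})) ≤ 12*δ + dist q s := by
      refine Metric.diam_le_of_forall_dist_le (by positivity) fun w₁ hw₁ w₂ hw₂ => ?_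
      have key : ∀ w, w ∈ projSet A₁ ({x₀} ∪ {z}) →
          w ∈ nearestPts A₁ x₀ ∨ w ∈ nearestPts A₁ z := by
        intro w hw
        rcases projSet_cases hw with h | h
        · exact Or.inl h
        · simp only [projSet, Set.mem_iUnion, Set.mem_singleton_iff] at h
          obtain ⟨b, rfl, hwb⟩ := h
          exact Or.inr hwb
      have hqs0 : (0:ℝ) ≤ dist q s := dist_nonneg
      rcases key w₁ hw₁ with h₁ | h₁ <;> rcases key w₂ hw₂ with h₂ | h₂
      · have := pt_pair hδ hX hm₁ h₁ h₂; linarith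
      · have d1 := pt_pair hδ hX hm₁ h₁ hq
        have d2 := pt_pair hδ hX hm₁ h₂ hs
        have := dist_triangle4 w₁ q s w₂
        have c1 : dist s w₂ = dist w₂ s := dist_comm _ _
        linarith
      · have d1 := pt_pair hδ hX hm₁ h₂ hq
        have d2 := pt_pair hδ hX hm₁ h₁ hs
        have := dist_triangle4 w₂ q s w₁
        have c2 : dist w₂ w₁ = dist w₁ w₂ := dist_comm _ _
        have c1 : dist s w₁ = dist w₁ s := dist_comm _ _
        linarith
      · have := pt_pair hδ hX hm₁ h₁ h₂; linarith
    linarith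
  have hst₁ : 52*δ + B < dist s t₁ := by
    have := dist_triangle q t₁ s
    have c1 : dist t₁ s = dist s t₁ := dist_comm _ _
    linarith
  -- reverse projection is bounded, hence K₀-controlled
  have hbdE := lemE hδ hX hm₀ hm₁ pair0 hp hq hr
  have pair1 : ∀ u ∈ projSet A₁ A₀, ∀ v ∈ projSet A₁ A₀, dist u v ≤ B := by
    intro u hu v hv
    calc dist u v ≤ Metric.diam (projSet A₁ A₀) := Metric.dist_le_diam_of_mem hbdE hu hv
      _ ≤ K₀ := hK₀b hne
      _ ≤ B := hK₀B
  -- second Behrstock application: z and A₁ project close together on A₀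
  obtain ⟨t₂, ht₂⟩ := exists_nearest hm₀ s
  have hpzt₂ : dist pz t₂ ≤ 9*δ := lemF hδ hX hm₁ hm₀ pair1 hs hpz ht₁proj hst₁ ht₂
  have ht₂proj : t₂ ∈ projSet A₀ A₁ := mem_projSet_of hs.1 ht₂
  have ht₂r : dist t₂ r ≤ B := pair0 t₂ ht₂proj r hr
  -- conclude
  have hfinal : dist p pz ≤ Metric.diam (projSet A₀ ({x₀} ∪ {z})) := by
    have hsub : projSet A₀ ({x₀} ∪ {z}) ⊆ nearestPts A₀ x₀ ∪ nearestPts A₀ z := by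
      intro w hw
      rcases projSet_cases hw with h | h
      · exact Set.mem_union_left _ h
      · simp only [projSet, Set.mem_iUnion, Set.mem_singleton_iff] at h
        obtain ⟨b, rfl, hwb⟩ := h
        exact Set.mem_union_right _ hwb
    have hbd : Bornology.IsBounded (projSet A₀ ({x₀} ∪ {z})) :=
      ((nearestPts_bounded A₀ x₀).union (nearestPts_bounded A₀ z)).subset hsub
    refine Metric.dist_le_diam_of_mem hbd ?_ ?_
    · exact mem_projSet_of (Set.mem_union_left _ rfl) hp
    · exact mem_projSet_of (Set.mem_union_right _ rfl) hpz
  have hlow : d - (15*δ + 2*B) ≤ dist p pz := by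
    have t1 := dist_triangle4 p pz t₂ r
    have c1 : dist pz t₂ = dist pz t₂ := rfl
    have t2 := dist_triangle p pz r
    have t3 := dist_triangle4 p r t₂ pz
    have c2 : dist r t₂ = dist t₂ r := dist_comm _ _
    have c3 : dist t₂ pz = dist pz t₂ := dist_comm _ _
    linarith
  linarith

end lemH

end Aux

/-- **Nested projections along a chain of axes** (Lemma 8.8 of the paper). -/
theorem nested_axes_projection
    {X : Type*} [MetricSpace X] {G : Type*} [Group G] [MulAction G X]
    (δ : ℝ) (hX : GromovHyperbolic X δ)
    (hiso : ∀ (g : G) (x y : X), dist (g • x) (g • y) = dist x y)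
    (hnvc : ¬ VirtuallyCyclic G)
    (f : G) (ℓ : ℝ → X) (hgeo : ∀ s t : ℝ, dist (ℓ s) (ℓ t) = |s - t|)
    (haxis : ∀ t : ℝ, f • ℓ t = ℓ (t + 1))
    (x₀ : X) (hx₀ : x₀ ∈ Set.range ℓ) (hwpd : WPD f x₀)
    (K₀ : ℝ)
    (hK₀ : ∀ u v : G, u • Set.range ℓ ≠ v • Set.range ℓ →
      projDiam (u • Set.range ℓ) (v • Set.range ℓ) ≤ K₀) :
    ∃ K : ℝ, 0 < K ∧ ∀ N : ℕ, 1 ≤ N → ∀ γs : ℕ → Set X,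
      (∀ i ≤ N, ∃ u : G, γs i = u • Set.range ℓ) →
      ∀ z : X,
        (∀ i : ℕ, 1 ≤ i → i ≤ N → K ≤ projDist (γs (i - 1)) {x₀} (γs i)) →
        K ≤ projDist (γs N) {x₀} {z} →
        projDist (γs 0) {x₀} (γs 1) - K ≤ projDist (γs 0) {x₀} {z} := by
  classical
  -- nonnegativity of δ
  have hδ : 0 ≤ δ := by
    obtain ⟨γ, hγ⟩ := hX.1 x₀ x₀
    obtain ⟨u, hu, hud⟩ := hX.2 x₀ x₀ x₀ γ γ γ hγ hγ hγ 0 ⟨le_refl _, dist_nonneg⟩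
    have h0 : dist x₀ x₀ = 0 := dist_self x₀
    have hueq : u = γ 0 := by
      rcases hu with h | h <;>
      · obtain ⟨c, hc, rfl⟩ := h
        rw [h0] at hc
        have hc0 : c = 0 := le_antisymm hc.2 hc.1
        rw [hc0]
    rw [hueq, dist_self] at hud
    linarith
  have hB : (0:ℝ) ≤ max K₀ 0 := le_max_right _ _
  refine ⟨134*δ + 3*max K₀ 0 + 2, by linarith, ?_⟩
  have hline : ∀ u : G, ∀ s t : ℝ, dist (u • ℓ s) (u • ℓ t) = |s - t| := by
    intro u s t
    rw [hiso, hgeo]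
  have hset : ∀ u : G, u • Set.range ℓ = Set.range (fun t => u • ℓ t) := fun u =>
    Set.smul_set_range u ℓ
  -- the one-step lemma, specialised to axes of the family
  have step : ∀ A₀ A₁ : Set X, (∃ u : G, A₀ = u • Set.range ℓ) →
      (∃ u : G, A₁ = u • Set.range ℓ) → ∀ z : X,
      134*δ + 3*max K₀ 0 + 2 ≤ projDist A₀ {x₀} A₁ →
      74*δ + max K₀ 0 + 1 ≤ projDist A₁ {x₀} {z} →
      projDist A₀ {x₀} A₁ - (60*δ + 2*max K₀ 0 + 1) ≤ projDist A₀ {x₀} {z} := by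
    rintro A₀ A₁ ⟨u₀, rfl⟩ ⟨u₁, rfl⟩ z hh1 hh2
    have e₀ := hset u₀
    have e₁ := hset u₁
    simp only [projDist] at hh1 hh2 ⊢
    rw [e₀] at hh1 ⊢
    rw [e₁] at hh1 hh2 ⊢
    refine lemH hδ hX (hline u₀) (hline u₁) ?_ ?_ x₀ z hh1 hh2
    · intro hne
      have hne' : u₀ • Set.range ℓ ≠ u₁ • Set.range ℓ := by rw [e₀, e₁]; exact hne
      have := hK₀ u₀ u₁ hne'
      simp only [projDiam] at this
      rwa [e₀, e₁] at this
    · intro hne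
      have hne' : u₁ • Set.range ℓ ≠ u₀ • Set.range ℓ := by rw [e₀, e₁]; exact Ne.symm hne
      have := hK₀ u₁ u₀ hne'
      simp only [projDiam] at this
      rwa [e₀, e₁] at this
  -- main induction on the length of the chain
  have main : ∀ n : ℕ, ∀ γs : ℕ → Set X,
      (∀ i ≤ n + 1, ∃ u : G, γs i = u • Set.range ℓ) →
      ∀ z : X,
      (∀ i : ℕ, 1 ≤ i → i ≤ n + 1 →
        134*δ + 3*max K₀ 0 + 2 ≤ projDist (γs (i-1)) {x₀} (γs i)) →
      134*δ + 3*max K₀ 0 + 2 ≤ projDist (γs (n+1)) {x₀} {z} →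
      projDist (γs 0) {x₀} (γs 1) - (60*δ + 2*max K₀ 0 + 1) ≤ projDist (γs 0) {x₀} {z} := by
    intro n
    induction n with
    | zero =>
      intro γs hlines z hchain hlast
      exact step (γs 0) (γs 1) (hlines 0 (by omega)) (hlines 1 (by omega)) z
        (hchain 1 (by omega) (by omega)) (by linarith)
    | succ k ih =>
      intro γs hlines z hchain hlast
      have hshift := ih (fun i => γs (i+1)) (fun i hi => hlines (i+1) (by omega)) z
        (fun i h1 hi => by
          have hidx : i - 1 + 1 = i := by omega
          have := hchain (i+1) (by omega) (by omega)
          simpa [hidx] using this)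
        (by simpa using hlast)
      have h2chain := hchain 2 (by omega) (by omega)
      have hz1 : 74*δ + max K₀ 0 + 1 ≤ projDist (γs 1) {x₀} {z} := by
        have : projDist (γs 1) {x₀} (γs 2) - (60*δ + 2*max K₀ 0 + 1)
            ≤ projDist (γs 1) {x₀} {z} := by simpa using hshift
        simp only [Nat.reduceSub, Nat.reduceAdd] at h2chain ⊢
        linarith [h2chain, this]
      exact step (γs 0) (γs 1) (hlines 0 (by omega)) (hlines 1 (by omega)) z
        (hchain 1 (by omega) (by omega)) hz1
  intro N hN γs hlines z hchain hlast
  obtain ⟨n, rfl⟩ : ∃ n : ℕ, N = n + 1 := ⟨N - 1, by omega⟩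
  have := main n γs (fun i hi => hlines i hi) z (fun i h1 hi => hchain i h1 hi) hlast
  have hd0 : (0:ℝ) ≤ projDist (γs 0) {x₀} {z} := Metric.diam_nonneg
  linarith
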